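/- arXiv:1409.8622 — 4 statements merged into one kernel-verified Lean document; each statement's English description precedes it below -/
import Mathlib

section
/- For every τ ∈ (ℂ^×)^n one has Δ^L(k;i)(τ) = Σ_{p ∈ X_d(m,m')} Q(p). -/
open Matrix BigOperators

noncomputable section

open Fin.NatCast

/-- Cartan matrix of type A (1-based indices). -/
def cartan (i j : ℕ) : ℤ :=
  if i = j then 2 else if i = j + 1 ∨ j = i + 1 then -1 else 0

/-- `y_i(t)`: identity except the `(i+1,i)` entry (1-based) equals `t`. -/
def yMat (r i : ℕ) (t : ℂ) : Matrix (Fin (r + 1)) (Fin (r + 1)) ℂ :=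
  Matrix.of fun a b =>
    if a = b then 1 else if a.val = i ∧ b.val + 1 = i then t else 0

/-- `α_i^∨(c)`: diagonal matrix with `c` in position `i`, `c⁻¹` in position `i+1` (1-based). -/
def alphaMat (r i : ℕ) (c : ℂ) : Matrix (Fin (r + 1)) (Fin (r + 1)) ℂ :=
  Matrix.of fun a b =>
    if a = b then (if a.val + 1 = i then c else if a.val = i then c⁻¹ else 1) else 0

/-- `x_{-i}(t)`: identity except entries `(i,i) = t⁻¹`, `(i+1,i) = 1`, `(i+1,i+1) = t` (1-based). -/
def xneg (r i : ℕ) (t : ℂ) : Matrix (Fin (r + 1)) (Fin (r + 1)) ℂ :=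
  Matrix.of fun a b =>
    if a.val + 1 = i ∧ b.val + 1 = i then t⁻¹
    else if a.val = i ∧ b.val + 1 = i then 1
    else if a = b then (if a.val = i then t else 1)
    else 0

/-- `l_ζ = r + (r-1) + ⋯ + (r-ζ+1)`. -/
def lv (r : ℕ) : ℕ → ℕ
  | 0 => 0
  | z + 1 => lv r z + (r - z)

/-- One cycle `x_{-1}(τ_{base+1}) x_{-2}(τ_{base+2}) ⋯ x_{-len}(τ_{base+len})`. -/
def cyc (r : ℕ) (τ : ℕ → ℂ) (base len : ℕ) : Matrix (Fin (r + 1)) (Fin (r + 1)) ℂ :=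
  ((List.range len).map fun j => xneg r (j + 1) (τ (base + j + 1))).prod

/-- The matrix `M(τ) = x_{-i_1}(τ_1) ⋯ x_{-i_n}(τ_n)` for the word with `m-1` full cycles
`(1,…,r-ζ+1)` followed by a last cycle `(1,…,d)`. -/
def Mword (r m d : ℕ) (τ : ℕ → ℂ) : Matrix (Fin (r + 1)) (Fin (r + 1)) ℂ :=
  ((List.range (m - 1)).map fun z => cyc r τ (lv r z) (r - z)).prod *
    cyc r τ (lv r (m - 1)) d

open Fin.NatCast in
/-- Determinant of the `d×d` submatrix with rows `m'+1,…,m'+d` and columns `1,…,d` (1-based). -/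
def minorD (r m' d : ℕ) (M : Matrix (Fin (r + 1)) (Fin (r + 1)) ℂ) : ℂ :=
  (M.submatrix (fun p : Fin d => ((m' + p.val : ℕ) : Fin (r + 1)))
      (fun q : Fin d => ((q.val : ℕ) : Fin (r + 1)))).det

/-- `τ_{l_ζ + j}`, with the conventions `τ_{l_ζ+0} := 1` and `τ_{l_ζ+r+1} := 1`. -/
def tau2 {K : Type*} [Field K] (r : ℕ) (τ : ℕ → K) (z j : ℕ) : K :=
  if j = 0 ∨ j = r + 1 then 1 else τ (lv r z + j)

/-- The Laurent monomial `C̄(ζ,j) = τ_{l_ζ+j-1} / τ_{l_ζ+j}`. -/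
def Cbar {K : Type*} [Field K] (r : ℕ) (τ : ℕ → K) (z j : ℕ) : K :=
  tau2 r τ z (j - 1) / tau2 r τ z j

/-- The Laurent monomial `A_{ζ,j} = (τ_{l_ζ+j} τ_{l_{ζ+1}+j}) / (τ_{l_ζ+j+1} τ_{l_{ζ+1}+j-1})`. -/
def Amon {K : Type*} [Field K] (r : ℕ) (τ : ℕ → K) (z j : ℕ) : K :=
  tau2 r τ z j * tau2 r τ (z + 1) j / (tau2 r τ z (j + 1) * tau2 r τ (z + 1) (j - 1))

/-- Membership in `X_d(m,m')`: families `(a^{(s)}_i)` of positive integers, strictly increasing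
in `i`, going up by `0` or `1` in `s`, with `a^{(0)}_i = i` and `a^{(m)}_i = m'+i` (1-based `i`). -/
def IsPath (m d m' : ℕ) (p : Fin (m + 1) → Fin d → ℕ) : Prop :=
  (∀ s i, 1 ≤ p s i) ∧
  (∀ (s : Fin (m + 1)) (i i' : Fin d), i < i' → p s i < p s i') ∧
  (∀ (s : Fin m) (i : Fin d),
    p s.succ i = p s.castSucc i ∨ p s.succ i = p s.castSucc i + 1) ∧
  (∀ i : Fin d, p 0 i = i.val + 1 ∧ p (Fin.last m) i = m' + i.val + 1)

instance (m d m' : ℕ) (p : Fin (m + 1) → Fin d → ℕ) : Decidable (IsPath m d m' p) := by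
  unfold IsPath; infer_instance

/-- The label `Q(p) = ∏_{s=0}^{m-1} ∏_{i=1}^{d} τ_{l_{m-s-1}+a^{(s+1)}_i-1} / τ_{l_{m-s-1}+a^{(s)}_i}`. -/
def Qlab {K : Type*} [Field K] (r m d : ℕ) (τ : ℕ → K) (p : Fin (m + 1) → Fin d → ℕ) : K :=
  ∏ s : Fin m, ∏ i : Fin d,
    tau2 r τ (m - 1 - s.val) (p s.succ i - 1) / tau2 r τ (m - 1 - s.val) (p s.castSucc i)

/-- Explicit entries of the cycle matrix. -/
def cycEnt (r base len : ℕ) (τ : ℕ → ℂ) : Matrix (Fin (r + 1)) (Fin (r + 1)) ℂ :=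
  Matrix.of fun a b =>
    if a = b then
      (if a.val < len then (if a.val = 0 then 1 else τ (base + a.val)) / τ (base + a.val + 1)
       else if a.val = len ∧ 0 < len then τ (base + len) else 1)
    else if a.val = b.val + 1 ∧ b.val < len then 1 else 0

lemma mul_xneg (r i : ℕ) (hi1 : 1 ≤ i) (hir : i ≤ r) (t : ℂ)
    (A : Matrix (Fin (r + 1)) (Fin (r + 1)) ℂ) (a b : Fin (r + 1)) :
    (A * xneg r i t) a b =
      if b.val + 1 = i then t⁻¹ * A a b + A a (((b.val + 1 : ℕ) : Fin (r + 1)))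
      else if b.val = i then t * A a b
      else A a b := by
  rw [Matrix.mul_apply]
  by_cases h1 : b.val + 1 = i
  · rw [if_pos h1]
    set b' : Fin (r + 1) := ((b.val + 1 : ℕ) : Fin (r + 1)) with hb'
    have hb'v : b'.val = b.val + 1 := by
      rw [hb', Fin.val_cast_of_lt (by omega)]
    have hne : b' ≠ b := by
      intro h; rw [h] at hb'v; omega
    have key : ∀ c : Fin (r + 1), A a c * xneg r i t c b =
        (if c = b then t⁻¹ * A a c else 0) + (if c = b' then A a c else 0) := by
      intro c
      simp only [xneg, Matrix.of_apply]
      by_cases hc : c = b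
      · subst hc
        rw [if_pos ⟨h1, h1⟩, if_pos rfl, if_neg (by exact fun h => hne h.symm)]
        ring
      · rw [if_neg hc]
        by_cases hc2 : c = b'
        · subst hc2
          have h2 : b'.val = i := by omega
          have h3 : ¬ (b'.val + 1 = i) := by omega
          rw [if_neg (by exact fun h => h3 h.1), if_pos ⟨h2, h1⟩, if_pos rfl, if_neg hc]
          ring
        · rw [if_neg hc2]
          have h3 : ¬ (c.val + 1 = i) := by
            intro h; exact hc (Fin.ext (by omega))
          have h4 : ¬ (c.val = i) := by
            intro h; exact hc2 (Fin.ext (by omega))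
          rw [if_neg (by exact fun h => h3 h.1), if_neg (by exact fun h => h4 h.1),
            if_neg hc]
          ring
    rw [Finset.sum_congr rfl (fun c _ => key c), Finset.sum_add_distrib,
      Finset.sum_ite_eq', Finset.sum_ite_eq']
    simp
  · rw [if_neg h1]
    have key : ∀ c : Fin (r + 1), A a c * xneg r i t c b =
        if c = b then (if b.val = i then t else 1) * A a c else 0 := by
      intro c
      simp only [xneg, Matrix.of_apply]
      by_cases hc : c = b
      · subst hc
        rw [if_neg (by exact fun h => h1 h.2), if_neg (by exact fun h => h1 h.2),
          if_pos rfl, if_pos rfl]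
        ring
      · rw [if_neg hc, if_neg hc, if_neg (by exact fun h => h1 h.2),
          if_neg (by exact fun h => h1 h.2)]
        ring
    rw [Finset.sum_congr rfl (fun c _ => key c), Finset.sum_ite_eq']
    by_cases h2 : b.val = i <;> simp [h2]

lemma cyc_succ (r : ℕ) (τ : ℕ → ℂ) (base len : ℕ) :
    cyc r τ base (len + 1) = cyc r τ base len * xneg r (len + 1) (τ (base + len + 1)) := by
  unfold cyc
  rw [List.range_succ, List.map_append, List.prod_append]
  simp

lemma cyc_eq (r : ℕ) (τ : ℕ → ℂ) (base len : ℕ) (hlen : len ≤ r) :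
    cyc r τ base len = cycEnt r base len τ := by
  induction len with
  | zero =>
    unfold cyc cycEnt
    simp only [List.range_zero, List.map_nil, List.prod_nil]
    ext a b
    by_cases h : a = b <;> simp [Matrix.one_apply, h]
  | succ len ih =>
    rw [cyc_succ, ih (by omega)]
    ext a b
    rw [mul_xneg r (len + 1) (by omega) (by omega)]
    simp only [cycEnt, Matrix.of_apply]
    by_cases h1 : b.val + 1 = len + 1
    · -- column b.val = len
      rw [if_pos h1]
      have hbv : b.val = len := by omega
      have hb'v : (((b.val + 1 : ℕ) : Fin (r + 1))).val = b.val + 1 :=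
        Fin.val_cast_of_lt (by omega)
      by_cases hab : a = b
      · subst hab
        have h2 : ¬ (a = ((a.val + 1 : ℕ) : Fin (r + 1))) := by
          intro h; rw [Fin.ext_iff, hb'v] at h; omega
      
        rw [if_pos rfl, if_neg h2,
          if_neg (show ¬ ((a.val : ℕ) = (((a.val + 1 : ℕ) : Fin (r + 1))).val + 1 ∧
            (((a.val + 1 : ℕ) : Fin (r + 1))).val < len) from by simp only [hb'v]; omega),
          if_neg (show ¬ a.val < len from by omega),
          if_pos rfl, if_pos (show a.val < len + 1 from by omega)]
        by_cases hl : len = 0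
        · rw [if_neg (show ¬ (a.val = len ∧ 0 < len) from by omega)]
          simp only [hbv, hl, if_pos rfl, if_true]
          ring
        · rw [if_pos ⟨hbv, by omega⟩]
          simp only [hbv, if_neg hl]
          ring
      · rw [if_neg hab]
        by_cases hab2 : a = ((b.val + 1 : ℕ) : Fin (r + 1))
        · have hav : a.val = b.val + 1 := by rw [hab2]; exact hb'v
          rw [if_neg (show ¬ (a.val = b.val + 1 ∧ b.val < len) from by omega),
            if_pos hab2,
            if_neg (show ¬ a.val < len from by omega),
            if_neg (show ¬ (a.val = len ∧ 0 < len) from by omega),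
            if_neg hab,
            if_pos (show a.val = b.val + 1 ∧ b.val < len + 1 from ⟨hav, by omega⟩)]
          ring
        · have hav2 : ¬ (a.val = b.val + 1) := by
            intro h; exact hab2 (Fin.ext (by rw [hb'v]; omega))
          rw [if_neg (show ¬ (a.val = b.val + 1 ∧ b.val < len) from by omega),
            if_neg hab2,
            if_neg (show ¬ ((a.val : ℕ) = (((b.val + 1 : ℕ) : Fin (r + 1))).val + 1 ∧
              (((b.val + 1 : ℕ) : Fin (r + 1))).val < len) from by simp only [hb'v]; omega),
            if_neg hab,
            if_neg (show ¬ (a.val = b.val + 1 ∧ b.val < len + 1) from by omega)]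
          ring
    · rw [if_neg h1]
      by_cases h2 : b.val = len + 1
      · rw [if_pos h2]
        by_cases hab : a = b
        · subst hab
          rw [if_pos rfl,
            if_neg (show ¬ a.val < len from by omega),
            if_neg (show ¬ (a.val = len ∧ 0 < len) from by omega),
            if_pos rfl,
            if_neg (show ¬ a.val < len + 1 from by omega),
            if_pos (show a.val = len + 1 ∧ 0 < len + 1 from ⟨h2, by omega⟩),
            show base + len + 1 = base + (len + 1) from by omega]
          ring
        · rw [if_neg hab,
            if_neg (show ¬ (a.val = b.val + 1 ∧ b.val < len) from by omega),
            if_neg hab,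
            if_neg (show ¬ (a.val = b.val + 1 ∧ b.val < len + 1) from by omega)]
          ring
      · rw [if_neg h2]
        by_cases hab : a = b
        · subst hab
          rw [if_pos rfl, if_pos rfl]
          by_cases h3 : a.val < len
          · rw [if_pos h3, if_pos (show a.val < len + 1 from by omega)]
          · rw [if_neg h3, if_neg (show ¬ a.val < len + 1 from by omega),
              if_neg (show ¬ (a.val = len ∧ 0 < len) from by omega),
              if_neg (show ¬ (a.val = len + 1 ∧ 0 < len + 1) from by omega)]
        · rw [if_neg hab, if_neg hab]
          by_cases h3 : a.val = b.val + 1 ∧ b.val < len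
          · rw [if_pos h3, if_pos (show a.val = b.val + 1 ∧ b.val < len + 1 from ⟨h3.1, by omega⟩)]
          · rw [if_neg h3,
              if_neg (show ¬ (a.val = b.val + 1 ∧ b.val < len + 1) from by
                push_neg at h3 ⊢; intro h; have := h3 h; omega)]

def wght (τ : ℕ → ℂ) (base j : ℕ) : ℂ :=
  (if j - 1 = 0 then 1 else τ (base + (j - 1))) / τ (base + j)

def minorG (r m' d : ℕ) (A : Matrix (Fin (r + 1)) (Fin (r + 1)) ℂ) (a : Fin d → ℕ) : ℂ :=
  (A.submatrix (fun p : Fin d => ((m' + p.val : ℕ) : Fin (r + 1)))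
      (fun q : Fin d => ((a q - 1 : ℕ) : Fin (r + 1)))).det

lemma minorG_zero (r m' d : ℕ) (A : Matrix (Fin (r + 1)) (Fin (r + 1)) ℂ)
    (a : Fin d → ℕ) (i j : Fin d) (hij : i ≠ j) (hv : a i = a j) :
    minorG r m' d A a = 0 := by
  unfold minorG
  rw [← Matrix.det_transpose]
  exact Matrix.det_zero_of_row_eq hij (by
    funext p
    simp [Matrix.transpose_apply, Matrix.submatrix_apply, hv])

lemma cycEnt_col (r base len : ℕ) (τ : ℕ → ℂ) (j : ℕ)
    (hj1 : 1 ≤ j) (hjl : j ≤ len) (hlen : len ≤ r) (c : Fin (r + 1)) :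
    cycEnt r base len τ c (((j - 1 : ℕ) : Fin (r + 1))) =
      (if c = ((j - 1 : ℕ) : Fin (r + 1)) then wght τ base j else 0) +
      (if c = ((j : ℕ) : Fin (r + 1)) then 1 else 0) := by
  have h0v : (((j - 1 : ℕ) : Fin (r + 1))).val = j - 1 := Fin.val_cast_of_lt (by omega)
  have h1v : (((j : ℕ) : Fin (r + 1))).val = j := Fin.val_cast_of_lt (by omega)
  have hne : ((j - 1 : ℕ) : Fin (r + 1)) ≠ ((j : ℕ) : Fin (r + 1)) := by
    intro h; rw [Fin.ext_iff, h0v, h1v] at h; omega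
  simp only [cycEnt, Matrix.of_apply]
  by_cases hc0 : c = ((j - 1 : ℕ) : Fin (r + 1))
  · subst hc0
    rw [if_pos rfl, if_pos rfl, if_neg hne, if_pos (show _ < len from by rw [h0v]; omega)]
    rw [h0v, wght, show base + (j - 1) + 1 = base + j from by omega]
    by_cases hj : j = 1
    · simp [hj]
    · rw [if_neg (show ¬ (j - 1 = 0) from by omega)]
      ring
  · rw [if_neg hc0, if_neg hc0]
    by_cases hc1 : c = ((j : ℕ) : Fin (r + 1))
    · subst hc1
      rw [if_pos (show _ from by constructor <;> [rw [h1v, h0v]; rw [h0v]] <;> omega), if_pos rfl]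
      ring
    · rw [if_neg (show ¬ (c.val = (((j - 1 : ℕ) : Fin (r + 1))).val + 1 ∧ _) from ?_), if_neg hc1]
      · ring
      · rw [h0v]
        push_neg
        intro h
        exfalso
        exact hc1 (Fin.ext (by rw [h1v]; omega))

lemma peel (r m' d base len : ℕ) (τ : ℕ → ℂ) (hlen : len ≤ r)
    (A : Matrix (Fin (r + 1)) (Fin (r + 1)) ℂ) (a : Fin d → ℕ)
    (ha1 : ∀ i, 1 ≤ a i) (hal : ∀ i, a i ≤ len) :
    minorG r m' d (A * cycEnt r base len τ) a =
      ∑ ε : Fin d → Bool,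
        (∏ q, if ε q then (1 : ℂ) else wght τ base (a q)) *
          minorG r m' d A (fun q => a q + if ε q then 1 else 0) := by
  classical
  set rp : Fin d → Fin (r + 1) := fun p => ((m' + p.val : ℕ) : Fin (r + 1)) with hrp
  -- the submatrix transposed, rows indexed by column-index q
  have key : ∀ q p, (A * cycEnt r base len τ) (rp p) ((a q - 1 : ℕ) : Fin (r + 1)) =
      wght τ base (a q) * A (rp p) ((a q - 1 : ℕ) : Fin (r + 1)) +
        A (rp p) ((a q : ℕ) : Fin (r + 1)) := by
    intro q p
    rw [Matrix.mul_apply]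
    have : ∀ c, A (rp p) c * cycEnt r base len τ c ((a q - 1 : ℕ) : Fin (r + 1)) =
        (if c = ((a q - 1 : ℕ) : Fin (r + 1)) then wght τ base (a q) * A (rp p) c else 0) +
        (if c = ((a q : ℕ) : Fin (r + 1)) then A (rp p) c else 0) := by
      intro c
      have hne : ((a q - 1 : ℕ) : Fin (r + 1)) ≠ ((a q : ℕ) : Fin (r + 1)) := by
        have e0 : (((a q - 1 : ℕ) : Fin (r + 1))).val = a q - 1 :=
          Fin.val_cast_of_lt (by have := hal q; omega)
        have e1 : (((a q : ℕ) : Fin (r + 1))).val = a q :=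
          Fin.val_cast_of_lt (by have := hal q; omega)
        intro h; rw [Fin.ext_iff, e0, e1] at h; have := ha1 q; omega
      rw [cycEnt_col r base len τ (a q) (ha1 q) (hal q) hlen c]
      by_cases h1 : c = ((a q - 1 : ℕ) : Fin (r + 1)) <;>
        by_cases h2 : c = ((a q : ℕ) : Fin (r + 1)) <;>
        simp [h1, h2, hne, Ne.symm hne] <;> ring
    rw [Finset.sum_congr rfl fun c _ => this c, Finset.sum_add_distrib,
      Finset.sum_ite_eq', Finset.sum_ite_eq']
    simp [mul_comm]
  -- express det via the alternating map on rows of the transpose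
  have hdet : minorG r m' d (A * cycEnt r base len τ) a =
      Matrix.detRowAlternating
        (((A * cycEnt r base len τ).submatrix rp
          (fun q : Fin d => ((a q - 1 : ℕ) : Fin (r + 1))))ᵀ) := by
    rw [minorG, ← Matrix.det_transpose]
    rfl
  rw [hdet]
  have hrow : (((A * cycEnt r base len τ).submatrix rp
      (fun q : Fin d => ((a q - 1 : ℕ) : Fin (r + 1))))ᵀ) =
      fun q => ∑ e : Bool,
        (if e then (1 : ℂ) else wght τ base (a q)) •
          (fun p => A (rp p) (((a q - 1 + if e then 1 else 0 : ℕ)) : Fin (r + 1))) := by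
    funext q p
    simp only [Matrix.transpose_apply, Matrix.submatrix_apply]
    rw [key q p]
    simp only [Fintype.sum_bool]
    have h1 : a q - 1 + 1 = a q := by have := ha1 q; omega
    simp [h1]
    ring
  rw [hrow]
  show (Matrix.detRowAlternating (R := ℂ) (n := Fin d)).toMultilinearMap _ = _
  rw [(Matrix.detRowAlternating (R := ℂ) (n := Fin d)).toMultilinearMap.map_sum]
  refine Finset.sum_congr rfl fun ε _ => ?_
  rw [(Matrix.detRowAlternating (R := ℂ) (n := Fin d)).toMultilinearMap.map_smul_univ]
  rw [smul_eq_mul]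
  congr 1
  have : (fun q p => A (rp p) (((a q - 1 + if ε q then 1 else 0 : ℕ)) : Fin (r + 1))) =
      ((A.submatrix rp (fun q : Fin d => (((a q + if ε q then 1 else 0) - 1 : ℕ) : Fin (r + 1))))ᵀ) := by
    funext q p
    simp only [Matrix.transpose_apply, Matrix.submatrix_apply]
    congr 2
    have := ha1 q
    omega
  show Matrix.detRowAlternating (fun q p => A (rp p) _) = _
  rw [this]
  show ((A.submatrix rp _)ᵀ).det = _
  rw [Matrix.det_transpose]
  rfl



/-! ## Iteration infrastructure -/

def cycL (r m d : ℕ) (τ : ℕ → ℂ) : List (Matrix (Fin (r + 1)) (Fin (r + 1)) ℂ) :=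
  ((List.range (m - 1)).map fun z => cyc r τ (lv r z) (r - z)) ++ [cyc r τ (lv r (m - 1)) d]

def lpr (r m d : ℕ) (τ : ℕ → ℂ) (j : ℕ) : Matrix (Fin (r + 1)) (Fin (r + 1)) ℂ :=
  ((cycL r m d τ).take j).prod

lemma cycL_length (r m d : ℕ) (τ : ℕ → ℂ) : (cycL r m d τ).length = m - 1 + 1 := by
  simp [cycL]

lemma lp_zero (r m d : ℕ) (τ : ℕ → ℂ) : lpr r m d τ 0 = 1 := by simp [lpr]

lemma lp_full (r m d : ℕ) (τ : ℕ → ℂ) (hm : 1 ≤ m) : lpr r m d τ m = Mword r m d τ := by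
  unfold lpr Mword
  rw [List.take_of_length_le (by rw [cycL_length]; omega)]
  unfold cycL
  rw [List.prod_append]
  simp

lemma lp_succ (r m d : ℕ) (τ : ℕ → ℂ) (hm : 1 ≤ m) (t : ℕ) (ht : t < m) :
    lpr r m d τ (m - t) =
      lpr r m d τ (m - t - 1) *
        cyc r τ (lv r (m - 1 - t)) (if t = 0 then d else r - (m - 1 - t)) := by
  have hj : m - t - 1 < (cycL r m d τ).length := by rw [cycL_length]; omega
  have h1 : m - t = (m - t - 1) + 1 := by omega
  unfold lpr
  rw [h1, List.prod_take_succ _ _ hj]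
  congr 1
  simp only [cycL]
  rw [List.getElem_append]
  by_cases h0 : t = 0
  · subst h0
    rw [dif_neg (by simp)]
    simp
  · rw [dif_pos (by simp; omega)]
    rw [List.getElem_map, List.getElem_range]
    have : m - t - 1 = m - 1 - t := by omega
    rw [this, if_neg h0]

/-- `a^{(s)}_i` determined by the family of up/stay choices `e`. -/
def aeF (d t : ℕ) (e : Fin t → Fin d → Bool) (s : ℕ) (i : Fin d) : ℕ :=
  i.val + 1 + ∑ s' : Fin t, if s'.val < s ∧ e s' i then 1 else 0

def GoodE (d t : ℕ) (e : Fin t → Fin d → Bool) : Prop :=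
  ∀ s, s ≤ t → ∀ i j : Fin d, i < j → aeF d t e s i < aeF d t e s j

instance (d t : ℕ) (e : Fin t → Fin d → Bool) : Decidable (GoodE d t e) := by
  unfold GoodE; infer_instance

def WE (r m d : ℕ) (τ : ℕ → ℂ) (t : ℕ) (e : Fin t → Fin d → Bool) : ℂ :=
  ∏ s : Fin t, ∏ i : Fin d,
    (if e s i then 1 else wght τ (lv r (m - 1 - s.val)) (aeF d t e s.val i))

lemma aeF_lb (d t : ℕ) (e : Fin t → Fin d → Bool) (s : ℕ) (i : Fin d) :
    i.val + 1 ≤ aeF d t e s i := by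
  unfold aeF; omega

lemma aeF_ub (d t : ℕ) (e : Fin t → Fin d → Bool) (s : ℕ) (i : Fin d) :
    aeF d t e s i ≤ i.val + 1 + t := by
  unfold aeF
  have h : (∑ s' : Fin t, if s'.val < s ∧ e s' i then 1 else 0) ≤ t := by
    calc (∑ s' : Fin t, if s'.val < s ∧ e s' i then 1 else 0)
        ≤ ∑ _s' : Fin t, 1 := Finset.sum_le_sum (fun x _ => by split <;> omega)
      _ = t := by simp
  omega

lemma aeF_zero (d : ℕ) (e : Fin 0 → Fin d → Bool) (s : ℕ) (i : Fin d) :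
    aeF d 0 e s i = i.val + 1 := by
  unfold aeF
  simp

lemma aeF_snoc_le (d t : ℕ) (e : Fin t → Fin d → Bool) (ε : Fin d → Bool)
    (s : ℕ) (hs : s ≤ t) (i : Fin d) :
    aeF d (t + 1) (Fin.snoc e ε) s i = aeF d t e s i := by
  unfold aeF
  simp only [Fin.sum_univ_castSucc, Fin.snoc_castSucc, Fin.snoc_last, Fin.coe_castSucc,
    Fin.val_last]
  have hlast : ¬ (t < s ∧ ε i = true) := fun h => by omega
  rw [if_neg hlast, add_zero]

lemma aeF_snoc_top (d t : ℕ) (e : Fin t → Fin d → Bool) (ε : Fin d → Bool) (i : Fin d) :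
    aeF d (t + 1) (Fin.snoc e ε) (t + 1) i = aeF d t e t i + (if ε i then 1 else 0) := by
  unfold aeF
  simp only [Fin.sum_univ_castSucc, Fin.snoc_castSucc, Fin.snoc_last, Fin.coe_castSucc,
    Fin.val_last]
  have h1 : ∀ s' : Fin t, (if (s'.val < t + 1 ∧ e s' i = true) then (1:ℕ) else 0)
      = (if s'.val < t ∧ e s' i = true then 1 else 0) := by
    intro s'
    have hiff : (s'.val < t + 1 ∧ e s' i = true) ↔ (s'.val < t ∧ e s' i = true) := by
      constructor
      · exact fun h => ⟨s'.isLt, h.2⟩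
      · exact fun h => ⟨by omega, h.2⟩
    simp only [hiff]
  rw [Finset.sum_congr rfl fun s' _ => h1 s']
  have h2 : (if (t < t + 1 ∧ ε i = true) then (1:ℕ) else 0) = (if ε i then 1 else 0) := by
    simp
  rw [h2]
  omega

lemma WE_snoc (r m d : ℕ) (τ : ℕ → ℂ) (t : ℕ) (e : Fin t → Fin d → Bool) (ε : Fin d → Bool) :
    WE r m d τ (t + 1) (Fin.snoc e ε) =
      WE r m d τ t e *
        ∏ i, (if ε i then 1 else wght τ (lv r (m - 1 - t)) (aeF d t e t i)) := by
  unfold WE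
  rw [Fin.prod_univ_castSucc]
  congr 1
  · refine Finset.prod_congr rfl fun s _ => Finset.prod_congr rfl fun i _ => ?_
    simp only [Fin.snoc_castSucc, Fin.coe_castSucc]
    rw [aeF_snoc_le d t e ε s.val (by omega) i]
  · refine Finset.prod_congr rfl fun i _ => ?_
    simp only [Fin.snoc_last, Fin.val_last]
    rw [aeF_snoc_le d t e ε t (le_refl t) i]


lemma step_eq (r m d m' : ℕ) (hm1 : 1 ≤ m) (hmr : m ≤ r) (hd1 : 1 ≤ d)
    (hd : d ≤ r - m + 1) (τ : ℕ → ℂ) (t : ℕ) (ht : t < m) :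
    (∑ e : Fin t → Fin d → Bool,
      if GoodE d t e then
        WE r m d τ t e * minorG r m' d (lpr r m d τ (m - t)) (aeF d t e t) else 0) =
    ∑ e' : Fin (t + 1) → Fin d → Bool,
      if GoodE d (t + 1) e' then
        WE r m d τ (t + 1) e' *
          minorG r m' d (lpr r m d τ (m - (t + 1))) (aeF d (t + 1) e' (t + 1)) else 0 := by
  classical
  set len : ℕ := if t = 0 then d else r - (m - 1 - t) with hlendef
  have hlenr : len ≤ r := by
    rw [hlendef]; split <;> omega
  have hub : ∀ (e : Fin t → Fin d → Bool) (i : Fin d), aeF d t e t i ≤ len := by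
    intro e i
    have h1 := aeF_ub d t e t i
    have h2 : i.val + 1 ≤ d := by omega
    rw [hlendef]
    rcases Nat.eq_zero_or_pos t with h0 | h0
    · subst h0
      rw [aeF_zero, if_pos rfl]; omega
    · rw [if_neg (by omega)]; omega
  -- reindex RHS by snoc
  have reindex : ∀ F : (Fin (t + 1) → Fin d → Bool) → ℂ,
      (∑ e' : Fin (t + 1) → Fin d → Bool, F e') =
      ∑ e : Fin t → Fin d → Bool, ∑ ε : Fin d → Bool, F (Fin.snoc e ε) := by
    intro F
    have h2 : (∑ p : (Fin t → Fin d → Bool) × (Fin d → Bool), F (Fin.snoc p.1 p.2)) =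
        ∑ e : Fin t → Fin d → Bool, ∑ ε : Fin d → Bool, F (Fin.snoc e ε) := by
      rw [Fintype.sum_prod_type]
    rw [← h2]
    symm
    apply Fintype.sum_bijective
      (fun p : (Fin t → Fin d → Bool) × (Fin d → Bool) => (Fin.snoc p.1 p.2 : Fin (t+1) → Fin d → Bool))
    · constructor
      · intro p q h
        have h1 : p.1 = q.1 := by
          funext s' i; have := congrFun (congrFun h s'.castSucc) i
          simp only [Fin.snoc_castSucc] at this
          exact this
        have h2 : p.2 = q.2 := by
          funext i; have := congrFun (congrFun h (Fin.last t)) i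
          simp only [Fin.snoc_last] at this
          exact this
        exact Prod.ext h1 h2
      · intro e'
        refine ⟨(fun s' => e' s'.castSucc, e' (Fin.last t)), ?_⟩
        exact Fin.snoc_init_self e'
    · intro p
      rfl
  rw [reindex]
  refine Finset.sum_congr rfl fun e _ => ?_
  by_cases hg : GoodE d t e
  · rw [if_pos hg]
    -- peel the cycle
    have hsm : ∀ i : Fin d, 1 ≤ aeF d t e t i := fun i => by have := aeF_lb d t e t i; omega
    have hpeel : minorG r m' d (lpr r m d τ (m - t)) (aeF d t e t) =
        ∑ ε : Fin d → Bool,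
          (∏ q, if ε q then (1 : ℂ) else wght τ (lv r (m - 1 - t)) (aeF d t e t q)) *
            minorG r m' d (lpr r m d τ (m - t - 1))
              (fun q => aeF d t e t q + if ε q then 1 else 0) := by
      rw [lp_succ r m d τ hm1 t ht, ← hlendef, cyc_eq r τ _ len hlenr]
      exact peel r m' d (lv r (m - 1 - t)) len τ hlenr _ _ hsm (hub e)
    rw [hpeel, Finset.mul_sum]
    refine Finset.sum_congr rfl fun ε _ => ?_
    -- now compare term by term
    by_cases hg' : GoodE d (t + 1) (Fin.snoc e ε)
    · rw [if_pos hg', WE_snoc]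
      have htop : aeF d (t + 1) (Fin.snoc e ε) (t + 1) =
          fun q => aeF d t e t q + if ε q then 1 else 0 := by
        funext q; rw [aeF_snoc_top]
      rw [htop]
      have : m - (t + 1) = m - t - 1 := by omega
      rw [this]
      ring
    · rw [if_neg hg']
      -- the minor vanishes: repeated columns
      have hbad : ∃ i j : Fin d, i ≠ j ∧
          (aeF d t e t i + if ε i then 1 else 0) = (aeF d t e t j + if ε j then 1 else 0) := by
        -- hg' fails only at level t+1
        have hmono : ∀ i j : Fin d, i < j →
            (aeF d t e t i + if ε i then 1 else 0) ≤ (aeF d t e t j + if ε j then 1 else 0) := by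
          intro i j hij
          have := hg t (le_refl t) i j hij
          split <;> split <;> omega
        by_contra hcon
        push_neg at hcon
        apply hg'
        intro s hs i j hij
        rcases Nat.lt_or_ge s (t + 1) with hst | hst
        · rw [aeF_snoc_le d t e ε s (by omega) i, aeF_snoc_le d t e ε s (by omega) j]
          exact hg s (by omega) i j hij
        · have hseq : s = t + 1 := by omega
          subst hseq
          rw [aeF_snoc_top, aeF_snoc_top]
          have h1 := hmono i j hij
          have h2 := hcon i j (by exact fun h => by subst h; exact lt_irrefl _ hij)
          omega
      obtain ⟨i, j, hij, hv⟩ := hbad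
      rw [minorG_zero r m' d _ _ i j hij hv]
      ring
  · rw [if_neg hg]
    symm
    apply Finset.sum_eq_zero
    intro ε _
    rw [if_neg]
    intro hg'
    apply hg
    intro s hs i j hij
    have h1 := hg' s (by omega) i j hij
    rwa [aeF_snoc_le d t e ε s hs i, aeF_snoc_le d t e ε s hs j] at h1



lemma minorD_minorG (r m' d : ℕ) (M : Matrix (Fin (r + 1)) (Fin (r + 1)) ℂ)
    (a : Fin d → ℕ) (ha : ∀ q : Fin d, a q = q.val + 1) :
    minorG r m' d M a = minorD r m' d M := by
  unfold minorG minorD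
  have hcol : (fun q : Fin d => ((a q - 1 : ℕ) : Fin (r + 1))) =
      (fun q : Fin d => ((q.val : ℕ) : Fin (r + 1))) := funext fun q => by rw [ha q]; simp
  rw [hcol]

lemma main_ind (r m d m' : ℕ) (hm1 : 1 ≤ m) (hmr : m ≤ r) (hd1 : 1 ≤ d)
    (hd : d ≤ r - m + 1) (τ : ℕ → ℂ) :
    ∀ t, t ≤ m →
      minorD r m' d (Mword r m d τ) =
        ∑ e : Fin t → Fin d → Bool,
          if GoodE d t e then
            WE r m d τ t e * minorG r m' d (lpr r m d τ (m - t)) (aeF d t e t) else 0 := by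
  intro t
  induction t with
  | zero =>
    intro _
    rw [Fintype.sum_eq_single (fun (_ : Fin 0) (_ : Fin d) => false)]
    · rw [if_pos, WE, Finset.univ_eq_empty, Finset.prod_empty, one_mul,
        Nat.sub_zero, lp_full r m d τ hm1,
        minorD_minorG r m' d _ _ (fun q => aeF_zero d _ 0 q)]
      intro s hs i j hij
      rw [aeF_zero, aeF_zero]
      have : i.val < j.val := hij
      omega
    · intro e he
      exfalso
      apply he
      funext s i
      exact s.elim0
  | succ t ih =>
    intro ht
    rw [ih (by omega), step_eq r m d m' hm1 hmr hd1 hd τ t (by omega)]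

lemma smono_gap (d : ℕ) (b : Fin d → ℕ) (h : ∀ i j : Fin d, i < j → b i < b j) :
    ∀ (n : ℕ) (i j : Fin d), j.val = i.val + n → b i + n ≤ b j := by
  intro n
  induction n with
  | zero =>
    intro i j hij
    have : i = j := Fin.ext (by omega)
    subst this
    omega
  | succ n ihn =>
    intro i j hij
    have hn : i.val + n < d := by have := j.isLt; omega
    set j' : Fin d := ⟨i.val + n, hn⟩ with hj'
    have h1 := ihn i j' rfl
    have h2 : j' < j := by rw [Fin.lt_def]; simp [hj']; omega
    have h3 := h j' j h2
    omega

lemma lv_gap (r z k : ℕ) (hzk : z + k ≤ r) : lv r z + k ≤ lv r (z + k) := by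
  induction k with
  | zero => simp
  | succ k ihk =>
    have h1 : lv r (z + (k + 1)) = lv r (z + k) + (r - (z + k)) := by
      rw [show z + (k + 1) = (z + k) + 1 from by omega]
      rfl
    have := ihk (by omega)
    omega

lemma minorG_one (r m' d : ℕ) (hm'd : m' + d ≤ r + 1) (hd1 : 1 ≤ d)
    (a : Fin d → ℕ)
    (ha1 : ∀ i : Fin d, i.val + 1 ≤ a i) (haub : ∀ i : Fin d, a i ≤ r + 1)
    (hmono : ∀ i j : Fin d, i < j → a i < a j) :
    minorG r m' d (1 : Matrix (Fin (r + 1)) (Fin (r + 1)) ℂ) a =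
      if ∀ i : Fin d, a i = m' + i.val + 1 then 1 else 0 := by
  classical
  by_cases hall : ∀ i : Fin d, a i = m' + i.val + 1
  · rw [if_pos hall]
    unfold minorG
    have : ((1 : Matrix (Fin (r + 1)) (Fin (r + 1)) ℂ).submatrix
        (fun p : Fin d => ((m' + p.val : ℕ) : Fin (r + 1)))
        (fun q : Fin d => ((a q - 1 : ℕ) : Fin (r + 1)))) = (1 : Matrix (Fin d) (Fin d) ℂ) := by
      ext p q
      have hv1 : (((m' + p.val : ℕ) : Fin (r + 1))).val = m' + p.val :=
        Fin.val_cast_of_lt (by have := p.isLt; omega)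
      have hv2 : (((a q - 1 : ℕ) : Fin (r + 1))).val = m' + q.val := by
        rw [hall q, show m' + q.val + 1 - 1 = m' + q.val from by omega]
        exact Fin.val_cast_of_lt (by have := q.isLt; omega)
      rw [Matrix.submatrix_apply, Matrix.one_apply, Matrix.one_apply]
      by_cases hpq : p = q
      · subst hpq
        rw [if_pos rfl, if_pos (Fin.ext (by rw [hv1, hv2]))]
      · rw [if_neg hpq, if_neg (by
          intro hcon
          rw [Fin.ext_iff, hv1, hv2] at hcon
          exact hpq (Fin.ext (by omega)))]
    rw [this, Matrix.det_one]
  · rw [if_neg hall]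
    -- there must be a column out of range
    have hout : ∃ q : Fin d, a q - 1 < m' ∨ m' + d ≤ a q - 1 := by
      by_contra hcon
      push_neg at hcon
      apply hall
      -- all columns in range: gaps force equality
      intro i
      have hlb : ∀ q : Fin d, m' + q.val + 1 ≤ a q := by
        intro q
        have hgap := smono_gap d a hmono q.val ⟨0, by omega⟩ q
          (by show q.val = (0 : ℕ) + q.val; omega)
        have h1 := (hcon (⟨0, by omega⟩ : Fin d)).1
        have h2 := ha1 (⟨0, by omega⟩ : Fin d)
        omega
      have hub : ∀ q : Fin d, a q ≤ m' + q.val + 1 := by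
        intro q
        have hgap := smono_gap d a hmono (d - 1 - q.val) q ⟨d - 1, by omega⟩
          (by show d - 1 = q.val + (d - 1 - q.val); have := q.isLt; omega)
        have h1 := (hcon (⟨d - 1, by omega⟩ : Fin d)).2
        have h2 := ha1 q
        omega
      have := hlb i; have := hub i
      omega
    obtain ⟨q, hq⟩ := hout
    unfold minorG
    apply Matrix.det_eq_zero_of_column_eq_zero q
    intro p
    rw [Matrix.submatrix_apply, Matrix.one_apply, if_neg]
    intro hcon
    have hv1 : (((m' + p.val : ℕ) : Fin (r + 1))).val = m' + p.val :=
      Fin.val_cast_of_lt (by have := p.isLt; omega)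
    have hv2 : (((a q - 1 : ℕ) : Fin (r + 1))).val = a q - 1 :=
      Fin.val_cast_of_lt (by have := haub q; have := ha1 q; omega)
    rw [Fin.ext_iff, hv1, hv2] at hcon
    have := p.isLt
    omega



lemma aeF_s0 (d t : ℕ) (e : Fin t → Fin d → Bool) (i : Fin d) :
    aeF d t e 0 i = i.val + 1 := by
  unfold aeF; simp

lemma aeF_step (d t : ℕ) (e : Fin t → Fin d → Bool) (s : ℕ) (hs : s < t) (i : Fin d) :
    aeF d t e (s + 1) i = aeF d t e s i + (if e ⟨s, hs⟩ i then 1 else 0) := by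
  unfold aeF
  have key : ∀ s' : Fin t, (if s'.val < s + 1 ∧ e s' i = true then (1:ℕ) else 0) =
      (if s'.val < s ∧ e s' i = true then 1 else 0) +
      (if s' = ⟨s, hs⟩ ∧ e s' i = true then 1 else 0) := by
    intro s'
    by_cases hb : e s' i = true
    · simp only [hb, and_true]
      by_cases h1 : s'.val < s
      · rw [if_pos (by omega), if_pos h1,
          if_neg (by intro h; rw [h] at h1; exact absurd h1 (by simp)), add_zero]
      · by_cases h2 : s'.val = s
        · rw [if_pos (by omega), if_neg h1, if_pos (Fin.ext h2), zero_add]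
        · rw [if_neg (by omega), if_neg h1,
            if_neg (by intro h; apply h2; rw [h]), add_zero]
    · simp [hb]
  rw [Finset.sum_congr rfl fun s' _ => key s', Finset.sum_add_distrib]
  have hsingle : (∑ s' : Fin t, if s' = ⟨s, hs⟩ ∧ e s' i = true then (1:ℕ) else 0) =
      (if e ⟨s, hs⟩ i then 1 else 0) := by
    rw [Finset.sum_eq_single (⟨s, hs⟩ : Fin t)]
    · by_cases h : e ⟨s, hs⟩ i = true <;> simp [h]
    · intro b _ hb; rw [if_neg (fun h => hb h.1)]
    · simp
  rw [hsingle]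
  omega

lemma aeF_stall (d t : ℕ) (e : Fin t → Fin d → Bool) (s : ℕ) (hs : t ≤ s) (i : Fin d) :
    aeF d t e (s + 1) i = aeF d t e s i := by
  unfold aeF
  congr 1
  refine Finset.sum_congr rfl fun s' _ => ?_
  have h := s'.isLt
  simp only [show (s'.val < s + 1 ∧ e s' i = true) ↔ (s'.val < s ∧ e s' i = true) from by
    constructor
    · exact fun hc => ⟨by omega, hc.2⟩
    · exact fun hc => ⟨by omega, hc.2⟩]

lemma aeF_ub' (d t : ℕ) (e : Fin t → Fin d → Bool) (s : ℕ) (i : Fin d) :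
    aeF d t e s i ≤ i.val + 1 + s := by
  induction s with
  | zero => rw [aeF_s0]
  | succ s ih =>
    by_cases hs : s < t
    · rw [aeF_step d t e s hs i]
      split <;> omega
    · rw [aeF_stall d t e s (by omega) i]
      omega

lemma aeF_mono_s (d t : ℕ) (e : Fin t → Fin d → Bool) (s1 s2 : ℕ) (h : s1 ≤ s2) (i : Fin d) :
    aeF d t e s1 i ≤ aeF d t e s2 i := by
  unfold aeF
  have : (∑ s' : Fin t, if s'.val < s1 ∧ e s' i = true then (1:ℕ) else 0) ≤
      ∑ s' : Fin t, if s'.val < s2 ∧ e s' i = true then (1:ℕ) else 0 :=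
    Finset.sum_le_sum fun x _ => by
      by_cases h1 : x.val < s1 ∧ e x i = true
      · rw [if_pos h1, if_pos ⟨by omega, h1.2⟩]
      · rw [if_neg h1]; split <;> omega
  omega

/-- the up/stay choices extracted from a path -/
def pToE (m d N : ℕ) (p : Fin (m + 1) → Fin d → Fin (N + 1)) : Fin m → Fin d → Bool :=
  fun s i => decide ((p s.succ i : ℕ) = (p s.castSucc i : ℕ) + 1)

/-- the path built from up/stay choices -/
def eToP (m d N : ℕ) (e : Fin m → Fin d → Bool) : Fin (m + 1) → Fin d → Fin (N + 1) :=
  fun s i => ((aeF d m e s.val i : ℕ) : Fin (N + 1))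

lemma aeF_of_path (m d N : ℕ) (p : Fin (m + 1) → Fin d → Fin (N + 1))
    (h0 : ∀ i, (p 0 i : ℕ) = i.val + 1)
    (hstep : ∀ (s : Fin m) (i : Fin d),
      (p s.succ i : ℕ) = (p s.castSucc i : ℕ) ∨ (p s.succ i : ℕ) = (p s.castSucc i : ℕ) + 1) :
    ∀ s (hs : s ≤ m) (i : Fin d),
      aeF d m (pToE m d N p) s i = (p ⟨s, by omega⟩ i : ℕ) := by
  intro s
  induction s with
  | zero =>
    intro hs i
    rw [aeF_s0]
    rw [show (⟨0, by omega⟩ : Fin (m + 1)) = 0 from rfl]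
    exact (h0 i).symm
  | succ s ihs =>
    intro hs i
    have hsm : s < m := by omega
    rw [aeF_step d m _ s hsm i, ihs (by omega) i]
    set sF : Fin m := ⟨s, hsm⟩ with hsF
    have hsucc : (⟨s + 1, by omega⟩ : Fin (m + 1)) = sF.succ := rfl
    have hcast : (⟨s, by omega⟩ : Fin (m + 1)) = sF.castSucc := rfl
    rw [hsucc, hcast]
    have hE : (pToE m d N p) sF i = decide ((p sF.succ i : ℕ) = (p sF.castSucc i : ℕ) + 1) := rfl
    rcases hstep sF i with h | h
    · have hdec : (pToE m d N p) sF i = false := by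
        rw [hE, decide_eq_false_iff_not]; omega
      rw [hdec]
      simp [h]
    · have hdec : (pToE m d N p) sF i = true := by
        rw [hE, decide_eq_true_eq]; omega
      rw [hdec]
      simp [h]


/-- `Δ^L(k;𝐢)(τ) = Σ_{p ∈ X_d(m,m')} Q(p)`. -/
theorem statement2 (r m d m' : ℕ) (hr : 1 ≤ r) (hm1 : 1 ≤ m) (hmr : m ≤ r)
    (hd1 : 1 ≤ d) (hd : d ≤ r - m + 1) (hm'1 : 1 ≤ m') (hm'm : m' ≤ m)
    (τ : ℕ → ℂ) (hτ : ∀ j, 1 ≤ j → j ≤ lv r (m - 1) + d → τ j ≠ 0) :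
    minorD r m' d (Mword r m d τ) =
      ∑ p ∈ Finset.univ.filter (fun p : Fin (m + 1) → Fin d → Fin (m' + d + 1) =>
          IsPath m d m' fun s i => (p s i : ℕ)),
        Qlab r m d τ (fun s i => (p s i : ℕ)) := by
  classical
  have hNm : m' + d ≤ r + 1 := by omega
  have hmain := main_ind r m d m' hm1 hmr hd1 hd τ m (le_refl m)
  rw [Nat.sub_self m, lp_zero r m d τ] at hmain
  have h2 : minorD r m' d (Mword r m d τ) =
      ∑ e ∈ Finset.univ.filter (fun e : Fin m → Fin d → Bool =>
          GoodE d m e ∧ ∀ i : Fin d, aeF d m e m i = m' + i.val + 1),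
        WE r m d τ m e := by
    rw [Finset.sum_filter, hmain]
    refine Finset.sum_congr rfl fun e _ => ?_
    by_cases hg : GoodE d m e
    · have hone := minorG_one r m' d hNm hd1 (aeF d m e m)
        (fun i => aeF_lb d m e m i)
        (fun i => by have h1 := aeF_ub' d m e m i; have h2 := i.isLt; omega)
        (fun i j hij => hg m (le_refl m) i j hij)
      rw [if_pos hg, hone]
      by_cases hep : ∀ i : Fin d, aeF d m e m i = m' + i.val + 1
      · rw [if_pos hep, if_pos ⟨hg, hep⟩, mul_one]
      · rw [if_neg hep, if_neg (fun h => hep h.2), mul_zero]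
    · rw [if_neg hg, if_neg (fun h => hg h.1)]
  rw [h2]
  have hval : ∀ e : Fin m → Fin d → Bool, GoodE d m e →
      (∀ i : Fin d, aeF d m e m i = m' + i.val + 1) →
      ∀ (s : Fin (m + 1)) (i : Fin d),
        ((eToP m d (m' + d) e) s i : ℕ) = aeF d m e s.val i := by
    intro e hg hep s i
    apply Fin.val_cast_of_lt
    have h1 := aeF_mono_s d m e s.val m (by omega) i
    have h2 := hep i
    have h3 := i.isLt
    omega
  apply Finset.sum_nbij' (eToP m d (m' + d)) (pToE m d (m' + d))
  · -- into path set
    intro e he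
    rw [Finset.mem_filter] at he ⊢
    obtain ⟨-, hg, hep⟩ := he
    refine ⟨Finset.mem_univ _, ?_, ?_, ?_, ?_⟩
    · intro s i
      show 1 ≤ ((eToP m d (m' + d) e) s i : ℕ)
      rw [hval e hg hep s i]
      have := aeF_lb d m e s.val i; omega
    · intro s i i' hii
      show ((eToP m d (m' + d) e) s i : ℕ) < ((eToP m d (m' + d) e) s i' : ℕ)
      rw [hval e hg hep s i, hval e hg hep s i']
      exact hg s.val (by omega) i i' hii
    · intro s i
      simp only [hval e hg hep]
      rw [show (s.succ : Fin (m + 1)).val = s.val + 1 from rfl,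
        show (s.castSucc : Fin (m + 1)).val = s.val from rfl,
        aeF_step d m e s.val s.isLt i, Fin.eta]
      by_cases hb : e s i = true
      · right; rw [if_pos hb]
      · left; rw [if_neg hb]; omega
    · intro i
      constructor
      · show ((eToP m d (m' + d) e) 0 i : ℕ) = i.val + 1
        rw [hval e hg hep 0 i, show ((0 : Fin (m + 1))).val = 0 from rfl, aeF_s0]
      · show ((eToP m d (m' + d) e) (Fin.last m) i : ℕ) = m' + i.val + 1
        rw [hval e hg hep (Fin.last m) i, show (Fin.last m).val = m from rfl]
        exact hep i
  · -- into E-set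
    intro p hp
    rw [Finset.mem_filter] at hp ⊢
    have hp2 := hp.2
    unfold IsPath at hp2
    obtain ⟨h1, h2, h3, h4⟩ := hp2
    have hae := aeF_of_path m d (m' + d) p (fun i => (h4 i).1) h3
    refine ⟨Finset.mem_univ _, ?_, ?_⟩
    · intro s hs i j hij
      rw [hae s hs i, hae s hs j]
      exact h2 ⟨s, by omega⟩ i j hij
    · intro i
      rw [hae m (le_refl m) i,
        show (⟨m, by omega⟩ : Fin (m + 1)) = Fin.last m from rfl]
      exact (h4 i).2
  · -- left inverse
    intro e he
    rw [Finset.mem_filter] at he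
    obtain ⟨-, hg, hep⟩ := he
    funext s i
    show decide _ = e s i
    simp only [hval e hg hep]
    rw [show (s.succ : Fin (m + 1)).val = s.val + 1 from rfl,
      show (s.castSucc : Fin (m + 1)).val = s.val from rfl,
      aeF_step d m e s.val s.isLt i, Fin.eta]
    by_cases hb : e s i = true
    · simp [hb]
    · have hb' : e s i = false := by simpa using hb
      simp [hb']
  · -- right inverse
    intro p hp
    rw [Finset.mem_filter] at hp
    have hp2 := hp.2
    unfold IsPath at hp2
    obtain ⟨h1, h2, h3, h4⟩ := hp2
    have hae := aeF_of_path m d (m' + d) p (fun i => (h4 i).1) h3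
    funext s i
    show (((aeF d m (pToE m d (m' + d) p) s.val i : ℕ)) : Fin (m' + d + 1)) = p s i
    rw [hae s.val (by omega) i, Fin.eta]
    exact Fin.cast_val_eq_self (p s i)
  · -- values coincide
    intro e he
    rw [Finset.mem_filter] at he
    obtain ⟨-, hg, hep⟩ := he
    unfold WE Qlab
    refine Finset.prod_congr rfl fun s _ => Finset.prod_congr rfl fun i _ => ?_
    simp only [hval e hg hep]
    rw [show (s.succ : Fin (m + 1)).val = s.val + 1 from rfl,
      show (s.castSucc : Fin (m + 1)).val = s.val from rfl,
      aeF_step d m e s.val s.isLt i, Fin.eta]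
    set z := m - 1 - s.val with hz
    set a := aeF d m e s.val i with ha
    have ha1 : 1 ≤ a := by have := aeF_lb d m e s.val i; omega
    have har : a ≤ r := by
      have hub := aeF_ub' d m e s.val i
      have hi := i.isLt
      have hs := s.isLt
      omega
    have hbound : lv r z + a ≤ lv r (m - 1) + d := by
      have hg2 := lv_gap r z s.val (by omega)
      rw [show z + s.val = m - 1 from by omega] at hg2
      have hub := aeF_ub' d m e s.val i
      have hi := i.isLt
      omega
    have hne : τ (lv r z + a) ≠ 0 := hτ _ (by omega) hbound
    by_cases hb : e s i = true
    · simp only [hb, if_true]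
      rw [show a + 1 - 1 = a from by omega]
      unfold tau2
      rw [if_neg (by omega : ¬ (a = 0 ∨ a = r + 1))]
      exact (div_self hne).symm
    · have hb' : e s i = false := by simpa using hb
      simp only [hb', Bool.false_eq_true, if_false]
      rw [show a + 0 = a from by omega]
      unfold wght tau2
      rw [if_neg (by omega : ¬ (a = 0 ∨ a = r + 1))]
      by_cases h0 : a - 1 = 0
      · rw [if_pos h0, if_pos (Or.inl h0)]
      · rw [if_neg h0, if_neg (by omega : ¬ (a - 1 = 0 ∨ a - 1 = r + 1))]
end
end

section
/- For every p ∈ X_d(m,m'), every 1 ≤ j ≤ m-m' and every 1 ≤ i ≤ d-1, one has 1 ≤ k^{(j)}_i < k^{(j)}_{i+1} ≤ m'+d and q^{(j)}_i ≤ q^{(j)}_{i+1}. -/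
open Matrix BigOperators

noncomputable section

/-- `1 ≤ k^{(j)}_i < k^{(j)}_{i+1} ≤ m'+d` and `q^{(j)}_i ≤ q^{(j)}_{i+1}`,
where for each `i`, `q i` enumerates `{s : a^{(s)}_i = a^{(s+1)}_i}` in increasing order and
`k^{(j)}_i = a^{(q^{(j)}_i)}_i`. -/
theorem statement10 (r m d m' : ℕ) (hr : 1 ≤ r) (hm1 : 1 ≤ m) (hmr : m ≤ r)
    (hd1 : 1 ≤ d) (hd : d ≤ r - m + 1) (hm'1 : 1 ≤ m') (hm'm : m' ≤ m)
    (p : Fin (m + 1) → Fin d → ℕ) (hp : IsPath m d m' p)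
    (q : Fin d → Fin (m - m') → Fin m) (hq : ∀ i, StrictMono (q i))
    (hqfix : ∀ i j, p (q i j).castSucc i = p (q i j).succ i)
    (hqall : ∀ i (s : Fin m), p s.castSucc i = p s.succ i → ∃ j, q i j = s)
    (i i' : Fin d) (hii' : i'.val = i.val + 1) (j : Fin (m - m')) :
    1 ≤ p (q i j).castSucc i ∧
    p (q i j).castSucc i < p (q i' j).castSucc i' ∧
    p (q i' j).castSucc i' ≤ m' + d ∧
    (q i j).val ≤ (q i' j).val := by
  obtain ⟨hpos, hmi, hstep, hends⟩ := hp
  -- monotonicity in s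
  have hmono_s : ∀ i : Fin d, Monotone (fun s => p s i) := by
    intro i
    rw [Fin.monotone_iff_le_succ]
    intro s
    rcases hstep s i with h | h <;> omega
  have hii : i < i' := by rw [Fin.lt_iff_val_lt_val]; omega
  -- counting function
  set C : Fin d → ℕ → ℕ := fun i n =>
    (Finset.univ.filter (fun t : Fin m => t.val < n ∧ p t.castSucc i = p t.succ i)).card with hC
  have hkey : ∀ (i : Fin d) (n : ℕ) (hn : n ≤ m),
      p ⟨n, Nat.lt_succ_of_le hn⟩ i + C i n = i.val + 1 + n := by
    intro i n
    induction n with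
    | zero =>
      intro hn
      have h0 : (⟨0, Nat.lt_succ_of_le hn⟩ : Fin (m+1)) = 0 := rfl
      have : C i 0 = 0 := by
        rw [hC]; simp
      rw [h0, this, (hends i).1]
    | succ n ih =>
      intro hn
      have hnm : n < m := hn
      set t : Fin m := ⟨n, hnm⟩ with ht
      have hset : Finset.univ.filter (fun u : Fin m => u.val < n + 1 ∧ p u.castSucc i = p u.succ i)
          = (Finset.univ.filter (fun u : Fin m => u.val < n ∧ p u.castSucc i = p u.succ i)) ∪
            (Finset.univ.filter (fun u : Fin m => u = t ∧ p u.castSucc i = p u.succ i)) := by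
        ext u
        simp only [Finset.mem_filter, Finset.mem_union, Finset.mem_univ, true_and]
        constructor
        · rintro ⟨hu, hP⟩
          rcases Nat.lt_succ_iff_lt_or_eq.mp hu with h | h
          · exact Or.inl ⟨h, hP⟩
          · exact Or.inr ⟨Fin.ext h, hP⟩
        · rintro (⟨hu, hP⟩ | ⟨rfl, hP⟩)
          · exact ⟨Nat.lt_succ_of_lt hu, hP⟩
          · exact ⟨Nat.lt_succ_self n, hP⟩
      have hdisj : Disjoint
          (Finset.univ.filter (fun u : Fin m => u.val < n ∧ p u.castSucc i = p u.succ i))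
          (Finset.univ.filter (fun u : Fin m => u = t ∧ p u.castSucc i = p u.succ i)) := by
        rw [Finset.disjoint_left]
        rintro u hu hv
        simp only [Finset.mem_filter] at hu hv
        have h1 := hu.2.1
        have h2 : u.val = n := by rw [hv.2.1]
        omega
      have hcard2 : (Finset.univ.filter
          (fun u : Fin m => u = t ∧ p u.castSucc i = p u.succ i)).card
          = if p t.castSucc i = p t.succ i then 1 else 0 := by
        split_ifs with h
        · rw [Finset.card_eq_one]
          refine ⟨t, ?_⟩
          ext u
          simp only [Finset.mem_filter, Finset.mem_univ, true_and, Finset.mem_singleton]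
          constructor
          · rintro ⟨rfl, _⟩; rfl
          · rintro rfl; exact ⟨rfl, h⟩
        · rw [Finset.card_eq_zero]
          ext u; simp only [Finset.mem_filter, Finset.mem_univ, true_and,
            Finset.notMem_empty, iff_false]
          rintro ⟨rfl, hh⟩; exact h hh
      have hCsucc : C i (n + 1) = C i n + if p t.castSucc i = p t.succ i then 1 else 0 := by
        rw [hC]
        simp only
        rw [hset, Finset.card_union_of_disjoint hdisj, hcard2]
      have hcs : (⟨n, Nat.lt_succ_of_le (le_of_lt hnm)⟩ : Fin (m+1)) = t.castSucc := rfl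
      have hsc : (⟨n + 1, Nat.lt_succ_of_le hn⟩ : Fin (m+1)) = t.succ := rfl
      have ihn := ih (le_of_lt hnm)
      rw [hcs] at ihn
      rw [hsc, hCsucc]
      rcases hstep t i with h | h
      · rw [if_pos h.symm]; omega
      · rw [if_neg (by omega)]; omega
  -- main: q i j ≤ q i' j
  have hqle : (q i j).val ≤ (q i' j).val := by
    by_contra hcon
    push_neg at hcon
    set s' : Fin m := q i' j with hs'
    have hs'm : s'.val + 1 ≤ m := s'.isLt
    -- lower bound on C i' (s'+1)
    have hlow : j.val + 1 ≤ C i' (s'.val + 1) := by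
      have := Finset.card_le_card_of_injOn (f := q i') (s := Finset.Iic j)
        (t := Finset.univ.filter (fun t : Fin m => t.val < s'.val + 1 ∧
          p t.castSucc i' = p t.succ i'))
        (by
          intro j'' hj''
          simp only [Finset.mem_coe, Finset.mem_Iic] at hj''
          simp only [Finset.mem_coe, Finset.mem_filter, Finset.mem_univ, true_and]
          refine ⟨?_, (hqfix i' j'')⟩
          have : q i' j'' ≤ q i' j := (hq i').monotone hj''
          omega)
        ((hq i').injective.injOn)
      rwa [Fin.card_Iic] at this
    -- upper bound on C i (s'+1)
    have hup : C i (s'.val + 1) ≤ j.val := by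
      have hsub : Finset.univ.filter (fun t : Fin m => t.val < s'.val + 1 ∧
          p t.castSucc i = p t.succ i) ⊆ (Finset.Iio j).image (q i) := by
        intro u hu
        simp only [Finset.mem_filter, Finset.mem_univ, true_and] at hu
        obtain ⟨j'', hj''⟩ := hqall i u hu.2
        have hlt : j'' < j := by
          have : q i j'' < q i j := by
            rw [hj'', Fin.lt_iff_val_lt_val]; omega
          exact (hq i).lt_iff_lt.mp this
        rw [Finset.mem_image]
        exact ⟨j'', Finset.mem_Iio.mpr hlt, hj''⟩
      calc C i (s'.val + 1) ≤ ((Finset.Iio j).image (q i)).card := Finset.card_le_card hsub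
        _ ≤ (Finset.Iio j).card := Finset.card_image_le
        _ = j.val := Fin.card_Iio j
    -- comparison
    have h1 := hkey i (s'.val + 1) hs'm
    have h2 := hkey i' (s'.val + 1) hs'm
    have h3 := hmi ⟨s'.val + 1, Nat.lt_succ_of_le hs'm⟩ i i' hii
    omega
  refine ⟨hpos _ _, ?_, ?_, hqle⟩
  · calc p (q i j).castSucc i ≤ p (q i' j).castSucc i := by
          apply hmono_s
          rw [Fin.le_iff_val_le_val]; exact hqle
      _ < p (q i' j).castSucc i' := hmi _ _ _ hii
  · calc p (q i' j).castSucc i' ≤ p (Fin.last m) i' := by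
          apply hmono_s; exact Fin.le_last _
      _ = m' + i'.val + 1 := (hends i').2
      _ ≤ m' + d := by have := i'.isLt; omega
end
end

section
/- For every p ∈ X_d(m,m') one has Q(p) = ∏_{i=1}^{d} ∏_{j=1}^{m-m'} C̄(m - q^{(j)}_i - 1, k^{(j)}_i). -/
open Matrix BigOperators

noncomputable section

/-- `Q(p) = ∏_{i=1}^{d} ∏_{j=1}^{m-m'} C̄(m - q^{(j)}_i - 1, k^{(j)}_i)`. -/
theorem statement11 (r m d m' : ℕ) (hr : 1 ≤ r) (hm1 : 1 ≤ m) (hmr : m ≤ r)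
    (hd1 : 1 ≤ d) (hd : d ≤ r - m + 1) (hm'1 : 1 ≤ m') (hm'm : m' ≤ m)
    (τ : ℕ → ℂ) (hτ : ∀ j, 1 ≤ j → j ≤ lv r (m - 1) + d → τ j ≠ 0)
    (p : Fin (m + 1) → Fin d → ℕ) (hp : IsPath m d m' p)
    (q : Fin d → Fin (m - m') → Fin m) (hq : ∀ i, StrictMono (q i))
    (hqfix : ∀ i j, p (q i j).castSucc i = p (q i j).succ i)
    (hqall : ∀ i (s : Fin m), p s.castSucc i = p s.succ i → ∃ j, q i j = s) :
    Qlab r m d τ p =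
      ∏ i : Fin d, ∏ j : Fin (m - m'),
        Cbar r τ (m - 1 - (q i j).val) (p (q i j).castSucc i) := by
  obtain ⟨hpos, hmono, hstep, hends⟩ := hp
  -- lv grows at least by 1 per step as long as we stay below r
  have hlv : ∀ z b : ℕ, z + b ≤ r → lv r z + b ≤ lv r (z + b) := by
    intro z b
    induction b with
    | zero => simp
    | succ n ih =>
      intro h
      have h1 : z + n ≤ r := by omega
      have := ih h1
      have h2 : lv r (z + (n + 1)) = lv r (z + n) + (r - (z + n)) := by
        rw [show z + (n + 1) = (z + n) + 1 from by ring]; rfl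
      omega
  -- bound: p s i ≤ s + i + 1
  have hbound : ∀ (n : ℕ) (hn : n < m + 1) (i : Fin d), p ⟨n, hn⟩ i ≤ n + i.val + 1 := by
    intro n
    induction n with
    | zero =>
      intro hn i
      have := (hends i).1
      have h0 : (0 : Fin (m + 1)) = ⟨0, hn⟩ := rfl
      rw [h0] at this
      omega
    | succ n ih =>
      intro hn i
      have hnm : n < m := by omega
      have hcast : (⟨n, hnm⟩ : Fin m).castSucc = ⟨n, by omega⟩ := rfl
      have hsucc : (⟨n, hnm⟩ : Fin m).succ = ⟨n + 1, hn⟩ := rfl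
      have := hstep ⟨n, hnm⟩ i
      rw [hcast, hsucc] at this
      have := ih (by omega) i
      omega
  -- nonzeroness of the relevant tau2 values
  have htau2 : ∀ (s : Fin m) (i : Fin d), tau2 r τ (m - 1 - s.val) (p s.castSucc i) ≠ 0 := by
    intro s i
    set k := p s.castSucc i with hk
    by_cases hk0 : k = 0 ∨ k = r + 1
    · rw [tau2, if_pos hk0]; exact one_ne_zero
    · rw [tau2, if_neg hk0]
      apply hτ
      · have := hpos s.castSucc i; omega
      · have hkb : k ≤ s.val + i.val + 1 := by
          have hcast : s.castSucc = ⟨s.val, by omega⟩ := rfl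
          rw [hk, hcast]; exact hbound s.val (by omega) i
        have hsm : s.val ≤ m - 1 := by have := s.isLt; omega
        have h1 : lv r (m - 1 - s.val) + s.val ≤ lv r (m - 1) := by
          have := hlv (m - 1 - s.val) s.val (by omega)
          rw [show m - 1 - s.val + s.val = m - 1 from by omega] at this
          exact this
        have hid : i.val + 1 ≤ d := i.isLt
        omega
  -- rewrite each factor
  have hfac : ∀ (s : Fin m) (i : Fin d),
      tau2 r τ (m - 1 - s.val) (p s.succ i - 1) / tau2 r τ (m - 1 - s.val) (p s.castSucc i)
        = if p s.castSucc i = p s.succ i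
            then Cbar r τ (m - 1 - s.val) (p s.castSucc i) else 1 := by
    intro s i
    rcases hstep s i with h | h
    · rw [if_pos h.symm, Cbar, h]
    · rw [if_neg (by omega), h, Nat.add_sub_cancel, div_self (htau2 s i)]
  calc Qlab r m d τ p
      = ∏ s : Fin m, ∏ i : Fin d,
          (if p s.castSucc i = p s.succ i
            then Cbar r τ (m - 1 - s.val) (p s.castSucc i) else 1) := by
        unfold Qlab
        exact Finset.prod_congr rfl fun s _ => Finset.prod_congr rfl fun i _ => hfac s i
    _ = ∏ i : Fin d, ∏ s : Fin m,
          (if p s.castSucc i = p s.succ i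
            then Cbar r τ (m - 1 - s.val) (p s.castSucc i) else 1) := Finset.prod_comm
    _ = ∏ i : Fin d, ∏ j : Fin (m - m'),
          Cbar r τ (m - 1 - (q i j).val) (p (q i j).castSucc i) := by
        refine Finset.prod_congr rfl fun i _ => ?_
        rw [← Finset.prod_filter]
        refine (Finset.prod_bij (fun j _ => q i j) ?_ ?_ ?_ ?_).symm
        · intro j _
          simp only [Finset.mem_filter, Finset.mem_univ, true_and]
          exact hqfix i j
        · intro a _ b _ hab
          exact (hq i).injective hab
        · intro s hs
          simp only [Finset.mem_filter, Finset.mem_univ, true_and] at hs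
          obtain ⟨j, hj⟩ := hqall i s hs
          exact ⟨j, Finset.mem_univ j, hj⟩
        · intro j _; rfl
end
end

section
/- Let (K^{(j)}_i)_{1≤i≤d, 1≤j≤m-m'} be integers such that for each j, 1 ≤ K^{(j)}_1 < K^{(j)}_2 < ⋯ < K^{(j)}_d ≤ m'+d, and for each i, i ≤ K^{(1)}_i ≤ K^{(2)}_i ≤ ⋯ ≤ K^{(m-m')}_i ≤ m'+i. Then there exists a path p ∈ X_d(m,m') whose associated data satisfy k^{(j)}_i = K^{(j)}_i for all i, j (equivalently, q^{(j)}_i = K^{(j)}_i + j - i - 1 for all i, j). -/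
open Matrix BigOperators

noncomputable section

private lemma gap_lemma {d : ℕ} (f : Fin d → ℕ) (hf : ∀ a b : Fin d, a < b → f a < f b) :
    ∀ (k : ℕ) (a b : Fin d), a.val + k = b.val → f a + k ≤ f b := by
  intro k
  induction k with
  | zero =>
    intro a b h
    have : a = b := Fin.ext (by omega)
    subst this; omega
  | succ k ih =>
    intro a b h
    have hb' : a.val + k < d := by omega
    have h1 := ih a ⟨a.val + k, hb'⟩ rfl
    have h2 := hf ⟨a.val + k, hb'⟩ b (by simp [Fin.lt_def]; omega)
    omega

/-- every admissible family `K^{(j)}_i` is realized as the data `k^{(j)}_i`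
of some path `p ∈ X_d(m,m')`. -/
theorem statement12 (r m d m' : ℕ) (hr : 1 ≤ r) (hm1 : 1 ≤ m) (hmr : m ≤ r)
    (hd1 : 1 ≤ d) (hd : d ≤ r - m + 1) (hm'1 : 1 ≤ m') (hm'm : m' ≤ m)
    (K : Fin (m - m') → Fin d → ℕ)
    (hK1 : ∀ (j : Fin (m - m')) (i i' : Fin d), i < i' → K j i < K j i')
    (hK2 : ∀ (j j' : Fin (m - m')), j ≤ j' → ∀ i, K j i ≤ K j' i)
    (hK3 : ∀ (j : Fin (m - m')) (i : Fin d),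
      i.val + 1 ≤ K j i ∧ K j i ≤ m' + i.val + 1) :
    ∃ p : Fin (m + 1) → Fin d → ℕ, IsPath m d m' p ∧
      ∃ q : Fin d → Fin (m - m') → Fin m,
        (∀ i, StrictMono (q i)) ∧
        (∀ i j, p (q i j).castSucc i = p (q i j).succ i) ∧
        (∀ i (s : Fin m), p s.castSucc i = p s.succ i → ∃ j, q i j = s) ∧
        (∀ i j, p (q i j).castSucc i = K j i) := by
  classical
  -- flat-step times
  set qv : Fin d → Fin (m - m') → ℕ := fun i j => K j i + j.val - i.val - 1 with hqvdef
  have hqv_add : ∀ i j, qv i j + (i.val + 1) = K j i + j.val := by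
    intro i j
    have h := (hK3 j i).1
    simp only [hqvdef]
    omega
  have hqv_mono : ∀ i, StrictMono (fun j => qv i j) := by
    intro i j j' h
    have h1 := hK2 j j' (le_of_lt h) i
    have h2 : j.val < j'.val := h
    have h3 := hqv_add i j
    have h4 := hqv_add i j'
    simp only at *
    omega
  have hq_lt : ∀ i j, qv i j < m := by
    intro i j
    have h1 := (hK3 j i).2
    have h2 : j.val < m - m' := j.isLt
    have h3 := hqv_add i j
    omega
  -- counting function
  set F : ℕ → Fin d → ℕ := fun s i => (Finset.univ.filter fun j => qv i j < s).card with hFdef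
  have hsplit : ∀ (s : ℕ) (i : Fin d),
      F (s + 1) i = F s i + (Finset.univ.filter fun j => qv i j = s).card := by
    intro s i
    have hunion : (Finset.univ.filter fun j : Fin (m - m') => qv i j < s + 1)
        = (Finset.univ.filter fun j => qv i j < s) ∪ (Finset.univ.filter fun j => qv i j = s) := by
      ext j; simp only [Finset.mem_filter, Finset.mem_union, Finset.mem_univ, true_and]
      omega
    have hdisj : Disjoint (Finset.univ.filter fun j : Fin (m - m') => qv i j < s)
        (Finset.univ.filter fun j => qv i j = s) := by
      rw [Finset.disjoint_left]
      intro j h1 h2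
      simp only [Finset.mem_filter, Finset.mem_univ, true_and] at h1 h2
      omega
    simp only [hFdef, hunion, Finset.card_union_of_disjoint hdisj]
  have hcard1 : ∀ (s : ℕ) (i : Fin d),
      (Finset.univ.filter fun j : Fin (m - m') => qv i j = s).card ≤ 1 := by
    intro s i
    apply Finset.card_le_one.2
    intro a ha b hb
    simp only [Finset.mem_filter, Finset.mem_univ, true_and] at ha hb
    exact (hqv_mono i).injective (ha.trans hb.symm)
  have hF_le : ∀ s i, F s i ≤ s := by
    intro s i
    have h1 : F s i = ((Finset.univ.filter fun j => qv i j < s).image (qv i)).card :=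
      (Finset.card_image_of_injOn ((hqv_mono i).injective.injOn)).symm
    have h2 : ((Finset.univ.filter fun j => qv i j < s).image (qv i)) ⊆ Finset.range s := by
      intro x hx
      simp only [Finset.mem_image, Finset.mem_filter, Finset.mem_univ, true_and,
        Finset.mem_range] at hx ⊢
      obtain ⟨j, hj, rfl⟩ := hx
      exact hj
    calc F s i = _ := h1
    _ ≤ (Finset.range s).card := Finset.card_le_card h2
    _ = s := Finset.card_range s
  have hF_anti : ∀ (s : ℕ) (i i' : Fin d), i ≤ i' → F s i' ≤ F s i := by
    intro s i i' h
    apply Finset.card_le_card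
    intro j hj
    simp only [Finset.mem_filter, Finset.mem_univ, true_and] at hj ⊢
    have hle : i.val ≤ i'.val := h
    have hg := gap_lemma (fun i => K j i) (fun a b hab => hK1 j a b hab)
      (i'.val - i.val) i i' (by omega)
    have h1 := hqv_add i j
    have h2 := hqv_add i' j
    omega
  have hFm : ∀ i, F m i = m - m' := by
    intro i
    have : (Finset.univ.filter fun j : Fin (m - m') => qv i j < m) = Finset.univ := by
      ext j; simp [hq_lt i j]
    simp [hFdef, this]
  have hFq : ∀ i j, F (qv i j) i = j.val := by
    intro i j
    have heq : (Finset.univ.filter fun j' : Fin (m - m') => qv i j' < qv i j)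
        = Finset.Iio j := by
      ext j'
      simp only [Finset.mem_filter, Finset.mem_univ, true_and, Finset.mem_Iio]
      exact (hqv_mono i).lt_iff_lt
    simp [hFdef, heq]
  have hFsing : ∀ i (j : Fin (m - m')),
      (Finset.univ.filter fun j' => qv i j' = qv i j) = {j} := by
    intro i j
    ext j'
    simp only [Finset.mem_filter, Finset.mem_univ, true_and, Finset.mem_singleton]
    constructor
    · exact fun h => (hqv_mono i).injective h
    · rintro rfl; rfl
  refine ⟨fun s i => i.val + 1 + (s.val - F s.val i), ⟨?_, ?_, ?_, ?_⟩, ?_⟩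
  · intro s i; show 1 ≤ i.val + 1 + (s.val - F s.val i); omega
  · intro s i i' h
    show i.val + 1 + (s.val - F s.val i) < i'.val + 1 + (s.val - F s.val i')
    have h1 := hF_anti s.val i i' (le_of_lt h)
    have h2 : i.val < i'.val := h
    omega
  · intro s i
    have h1 := hsplit s.val i
    have h2 := hcard1 s.val i
    have h3 := hF_le s.val i
    simp only [Fin.val_succ, Fin.coe_castSucc]
    omega
  · intro i
    constructor
    · simp [hFdef]
    · have h1 := hFm i
      simp only [Fin.val_last]
      omega
  · refine ⟨fun i j => ⟨qv i j, hq_lt i j⟩, ?_, ?_, ?_, ?_⟩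
    · intro i j j' h
      exact hqv_mono i h
    · intro i j
      have h1 := hsplit (qv i j) i
      have h2 := hF_le (qv i j) i
      rw [hFsing i j] at h1
      simp only [Fin.val_succ, Fin.coe_castSucc, Finset.card_singleton] at h1 ⊢
      omega
    · intro i s hs
      have h1 := hsplit s.val i
      have h2 := hcard1 s.val i
      have h3 := hF_le s.val i
      simp only [Fin.val_succ, Fin.coe_castSucc] at hs
      have hpos : 0 < (Finset.univ.filter fun j => qv i j = s.val).card := by omega
      obtain ⟨j, hj⟩ := Finset.card_pos.mp hpos
      simp only [Finset.mem_filter, Finset.mem_univ, true_and] at hj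
      exact ⟨j, Fin.ext hj⟩
    · intro i j
      have h1 := hFq i j
      have h2 := hqv_add i j
      have h3 : j.val < m - m' := j.isLt
      have h4 := (hK3 j i).1
      show i.val + 1 + (qv i j - F (qv i j) i) = K j i
      omega
end
end
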